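/- arXiv:1006.0521 — 4 statements merged into one kernel-verified Lean document; each statement's English description precedes it below -/
import Mathlib

section
/- Suppose each C_v (v ≠ v₀) has an initial object ∅_v, each D_v has an initial object, and q_v* preserves initial objects. Then the functor j_! : C_{v₀} → F sending L to the tuple with v₀-component L, v-component ∅_v for v ≠ v₀, and the unique map f_v from the initial object, is a fully faithful left adjoint of the evaluation functor j* : F → C_{v₀} at the distinguished component v₀. -/
open CategoryTheory Limits

universe u u₁ u₂

variable {V : Type u} (v₀ : V)
variable (C : V → Type u₁) [∀ v, Category.{u} (C v)]
variable (D : {v : V // v ≠ v₀} → Type u₂) [∀ p, Category.{u} (D p)]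
variable (q : ∀ p : {v : V // v ≠ v₀}, C p.1 ⥤ D p)
variable (θ : ∀ p : {v : V // v ≠ v₀}, C v₀ ⥤ D p)

/-- An object of the gluing category: a family `(F_v)_{v ∈ V}` of objects `F_v ∈ C_v`
(the component at the distinguished index `v₀` is `gen`, the components at `v ≠ v₀`
are `fib`), together with morphisms `f_v : q_v*(F_v) ⟶ θ_v*(F_{v₀})` in `D_v`. -/
structure Glued where
  gen : C v₀
  fib : ∀ p : {v : V // v ≠ v₀}, C p.1
  spec : ∀ p : {v : V // v ≠ v₀}, (q p).obj (fib p) ⟶ (θ p).obj gen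

namespace Glued

variable {v₀ C D q θ}

/-- A morphism in the gluing category: a family of componentwise morphisms compatible
with the structure maps. -/
@[ext]
structure Hom (F G : Glued v₀ C D q θ) where
  appGen : F.gen ⟶ G.gen
  appFib : ∀ p, F.fib p ⟶ G.fib p
  comm : ∀ p, F.spec p ≫ (θ p).map appGen = (q p).map (appFib p) ≫ G.spec p := by
    aesop_cat

instance : Category (Glued v₀ C D q θ) where
  Hom F G := Hom F G
  id F := { appGen := 𝟙 _, appFib := fun _ => 𝟙 _, comm := by simp }
  comp f g :=
    { appGen := f.appGen ≫ g.appGen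
      appFib := fun p => f.appFib p ≫ g.appFib p
      comm := fun p => by
        rw [Functor.map_comp, Functor.map_comp, ← Category.assoc, f.comm p,
          Category.assoc, g.comm p, Category.assoc] }
  id_comp f := by apply Hom.ext <;> simp
  comp_id f := by apply Hom.ext <;> simp
  assoc f g h := by apply Hom.ext <;> simp

/-- The evaluation functor at the distinguished index `v₀`. -/
@[simps]
def evalGen : Glued v₀ C D q θ ⥤ C v₀ where
  obj F := F.gen
  map f := f.appGen

/-- The evaluation functor at an index `v ≠ v₀`. -/
@[simps]
def evalFib (p : {v : V // v ≠ v₀}) : Glued v₀ C D q θ ⥤ C p.1 where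
  obj F := F.fib p
  map f := f.appFib p

end Glued

variable [∀ p : {v : V // v ≠ v₀}, HasInitial (C p.1)]
variable [∀ p, HasInitial (D p)]
variable [∀ p, PreservesColimit (Functor.empty.{0} (C p.1)) (q p)]

namespace Glued


/-- The image under `q_v*` of the initial object of `C_v` is initial. -/
noncomputable def qObjBotIsInitial (p : {v : V // v ≠ v₀}) :
    IsInitial ((q p).obj (⊥_ (C p.1))) :=
  initialIsInitial.isInitialObj (q p)

/-- `j_! : C_{v₀} ⥤ F`, extension by the initial object: the `v₀`-component is `L`,
all other components are initial, and the structure maps are the unique maps out of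
initial objects. -/
noncomputable def jShriek : C v₀ ⥤ Glued v₀ C D q θ where
  obj L :=
    { gen := L
      fib := fun p => ⊥_ (C p.1)
      spec := fun p => (qObjBotIsInitial v₀ C D q p).to _ }
  map φ :=
    { appGen := φ
      appFib := fun _ => 𝟙 _
      comm := fun p => (qObjBotIsInitial v₀ C D q p).hom_ext _ _ }
  map_id L := Hom.ext rfl rfl
  map_comp φ ψ := Hom.ext rfl (funext fun p => (Category.id_comp _).symm)

end Glued

/-- `j_!` (extension by the initial object) is a fully faithful left adjoint of the
evaluation functor `j* : F ⥤ C_{v₀}` at the distinguished component. -/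
theorem Glued.jShriek_fullyFaithful_leftAdjoint :
    Nonempty (Glued.jShriek v₀ C D q θ ⊣ Glued.evalGen (v₀ := v₀)) ∧
      (Glued.jShriek v₀ C D q θ).Full ∧ (Glued.jShriek v₀ C D q θ).Faithful := by
  refine ⟨⟨Adjunction.mkOfHomEquiv
    { homEquiv := fun L G =>
        { toFun := fun f => f.appGen
          invFun := fun φ =>
            { appGen := φ
              appFib := fun p => initial.to _
              comm := fun p => (Glued.qObjBotIsInitial v₀ C D q p).hom_ext _ _ }
          left_inv := fun f => Hom.ext rfl (funext fun p => initial.hom_ext _ _)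
          right_inv := fun φ => rfl }
      homEquiv_naturality_left_symm := fun f g =>
        Hom.ext rfl (funext fun p => initial.hom_ext _ _)
      homEquiv_naturality_right := fun f g => rfl }⟩,
    ⟨fun {L L'} φ => ⟨φ.appGen, Hom.ext rfl (funext fun p => initial.hom_ext _ _)⟩⟩,
    ⟨fun {L L'} f g h => congrArg Hom.appGen h⟩⟩
end

section
/- Suppose for each v ≠ v₀ the functor q_v* : C_v → D_v has a right adjoint q_{v*}. Then the functor j_* : C_{v₀} → F sending L to the tuple whose v₀-component is L, whose v-component is q_{v*}(θ_v*L), and whose structure map l_v : q_v*(q_{v*}θ_v*L) → θ_v*L is the counit of the adjunction, is right adjoint to the evaluation functor j* : F → C_{v₀}; moreover the counit j* ∘ j_* → id is an isomorphism, so j_* is fully faithful. -/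
open CategoryTheory Limits

universe u u₁ u₂

variable {V : Type u} (v₀ : V)
variable (C : V → Type u₁) [∀ v, Category.{u} (C v)]
variable (D : {v : V // v ≠ v₀} → Type u₂) [∀ p, Category.{u} (D p)]
variable (q : ∀ p : {v : V // v ≠ v₀}, C p.1 ⥤ D p)
variable (θ : ∀ p : {v : V // v ≠ v₀}, C v₀ ⥤ D p)

namespace Glued

variable {v₀ C D q θ}

@[simp] theorem id_appGen (F : Glued v₀ C D q θ) : Hom.appGen (𝟙 F) = 𝟙 F.gen := rfl

@[simp] theorem id_appFib (F : Glued v₀ C D q θ) (p : {v : V // v ≠ v₀}) :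
    Hom.appFib (𝟙 F) p = 𝟙 (F.fib p) := rfl

@[simp] theorem comp_appGen {F G H : Glued v₀ C D q θ} (f : F ⟶ G) (g : G ⟶ H) :
    Hom.appGen (f ≫ g) = Hom.appGen f ≫ Hom.appGen g := rfl

@[simp] theorem comp_appFib {F G H : Glued v₀ C D q θ} (f : F ⟶ G) (g : G ⟶ H)
    (p : {v : V // v ≠ v₀}) :
    Hom.appFib (f ≫ g) p = Hom.appFib f p ≫ Hom.appFib g p := rfl

end Glued

variable (r : ∀ p : {v : V // v ≠ v₀}, D p ⥤ C p.1)
variable (adj : ∀ p, q p ⊣ r p)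

namespace Glued

/-- `j_* : C_{v₀} ⥤ F`, the direct image of the distinguished component: the
`v₀`-component of `j_* L` is `L`, the `v`-component is `q_{v*}(θ_v^* L)` and the
structure map is the counit of the adjunction `q_v^* ⊣ q_{v*}`. -/
noncomputable def jStar : C v₀ ⥤ Glued v₀ C D q θ where
  obj L :=
    { gen := L
      fib := fun p => (r p).obj ((θ p).obj L)
      spec := fun p => (adj p).counit.app ((θ p).obj L) }
  map φ :=
    { appGen := φ
      appFib := fun p => (r p).map ((θ p).map φ)
      comm := fun p => ((adj p).counit.naturality ((θ p).map φ)).symm }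
  map_id L := Hom.ext rfl (funext fun p => by simp)
  map_comp φ ψ := Hom.ext rfl (funext fun p => by simp)

end Glued

/-!
A morphism `F ⟶ j_* L` in the gluing category is determined by its `v₀`-component
`φ : F_{v₀} ⟶ L`: compatibility with the structure maps says exactly that its
`v`-component is the adjoint transpose of `f_v ≫ θ_v^* φ` under `q_v^* ⊣ q_{v*}`.
Hence `Hom(F, j_* L) ≃ Hom(F_{v₀}, L)` naturally, which is the adjunction `j^* ⊣ j_*`;
its counit at `L` is the `v₀`-component of `𝟙 (j_* L)`, i.e. `𝟙 L`.
-/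

namespace Glued

section

variable {v₀ C D q θ r}

theorem jStar_hom_appFib {F : Glued v₀ C D q θ} {L : C v₀}
    (f : F ⟶ (jStar v₀ C D q θ r adj).obj L) (p : {v : V // v ≠ v₀}) :
    f.appFib p = (adj p).homEquiv _ _ (F.spec p ≫ (θ p).map f.appGen) :=
  ((adj p).eq_homEquiv_apply _ _).2 (f.comm p).symm

theorem jStar_hom_ext {F : Glued v₀ C D q θ} {L : C v₀}
    {f g : F ⟶ (jStar v₀ C D q θ r adj).obj L} (h : f.appGen = g.appGen) : f = g :=
  Hom.ext h (funext fun p => by rw [jStar_hom_appFib adj f, jStar_hom_appFib adj g, h])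

noncomputable def homToJStar {F : Glued v₀ C D q θ} {L : C v₀} (φ : F.gen ⟶ L) :
    F ⟶ (jStar v₀ C D q θ r adj).obj L where
  appGen := φ
  appFib p := (adj p).homEquiv _ _ (F.spec p ≫ (θ p).map φ)
  comm p := by
    dsimp [jStar]
    rw [← Adjunction.homEquiv_counit, Equiv.symm_apply_apply]

noncomputable def homEquivJStar (F : Glued v₀ C D q θ) (L : C v₀) :
    (evalGen.obj F ⟶ L) ≃ (F ⟶ (jStar v₀ C D q θ r adj).obj L) where
  toFun := homToJStar adj
  invFun f := f.appGen
  left_inv _ := rfl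
  right_inv _ := jStar_hom_ext adj rfl

variable (θ) in
noncomputable def evalGenAdjJStar : evalGen ⊣ jStar v₀ C D q θ r adj :=
  Adjunction.mkOfHomEquiv
    { homEquiv := homEquivJStar adj
      homEquiv_naturality_left_symm := fun _ _ => rfl
      homEquiv_naturality_right := fun _ _ => jStar_hom_ext adj rfl }

variable (θ) in
theorem evalGenAdjJStar_counit : (evalGenAdjJStar θ adj).counit = 𝟙 _ :=
  rfl

instance : IsIso (evalGenAdjJStar θ adj).counit := by
  rw [evalGenAdjJStar_counit]
  exact IsIso.id _

end

end Glued

/-- `j_*` is right adjoint to the evaluation functor `j* : F ⥤ C_{v₀}` at the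
distinguished component, the counit `j* ∘ j_* → id` of the adjunction is an
isomorphism, and hence `j_*` is fully faithful. -/
theorem Glued.jStar_rightAdjoint_counit_isIso :
    (∃ a : Glued.evalGen (v₀ := v₀) ⊣ Glued.jStar v₀ C D q θ r adj, IsIso a.counit) ∧
      (Glued.jStar v₀ C D q θ r adj).Full ∧ (Glued.jStar v₀ C D q θ r adj).Faithful := by
  have ff := (Glued.evalGenAdjJStar θ adj).fullyFaithfulROfIsIsoCounit
  exact ⟨⟨Glued.evalGenAdjJStar θ adj, inferInstance⟩, ff.full, ff.faithful⟩
end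

section
/- Fix w ≠ v₀ and suppose each C_v has a terminal object e_v and each D_v has a terminal object preserved by q_v* and θ_v*. Then the functor i_{w*} : C_w → F sending F to the tuple with w-component F, v-component e_v for v ≠ w, and the unique structure maps into/out of terminal objects, is right adjoint to the evaluation functor i_w* : F → C_w, and the unit id → i_w* ∘ i_{w*} is an isomorphism; hence i_{w*} is fully faithful. -/
open CategoryTheory Limits

universe u u₁ u₂

variable {V : Type u} (v₀ : V)
variable (C : V → Type u₁) [∀ v, Category.{u} (C v)]
variable (D : {v : V // v ≠ v₀} → Type u₂) [∀ p, Category.{u} (D p)]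
variable (q : ∀ p : {v : V // v ≠ v₀}, C p.1 ⥤ D p)
variable (θ : ∀ p : {v : V // v ≠ v₀}, C v₀ ⥤ D p)

variable [∀ v, HasTerminal (C v)]
variable [∀ p, HasTerminal (D p)]
variable [∀ p, PreservesLimit (Functor.empty.{0} (C p.1)) (q p)]
variable [∀ p, PreservesLimit (Functor.empty.{0} (C v₀)) (θ p)]
variable (p₀ : {v : V // v ≠ v₀})

namespace Glued

/-- The auxiliary functor `C_{p₀} ⥤ C_p` used by the direct image of a closed point:
the identity when `p = p₀`, and the constant functor with value the terminal object
otherwise. -/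
noncomputable def fibFunctor (p : {v : V // v ≠ v₀}) : C p₀.1 ⥤ C p.1 := by
  by_cases h : p = p₀
  · subst h; exact 𝟭 _
  · exact (Functor.const (C p₀.1)).obj (⊤_ (C p.1))

/-- `i_{p₀ *} : C_{p₀} ⥤ F`, the direct image of the closed point `p₀`: the
`p₀`-component of `i_{p₀ *} X` is `X`, every other component is the terminal object,
and the structure maps are the unique maps into terminal objects (using that `q` and
`θ` preserve terminal objects). -/
noncomputable def iStar : C p₀.1 ⥤ Glued v₀ C D q θ where
  obj X :=
    { gen := ⊤_ (C v₀)
      fib := fun p => (fibFunctor v₀ C p₀ p).obj X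
      spec := fun p => (terminalIsTerminal.isTerminalObj (θ p)).from _ }
  map φ :=
    { appGen := 𝟙 _
      appFib := fun p => (fibFunctor v₀ C p₀ p).map φ
      comm := fun p => (terminalIsTerminal.isTerminalObj (θ p)).hom_ext _ _ }
  map_id X := Hom.ext rfl (funext fun p => by simp)
  map_comp φ ψ := Hom.ext (by simp) (funext fun p => by simp)

end Glued

/-!
Every component of `i_{p₀ *} X` other than the `p₀`-th is terminal, so a morphism
`F ⟶ i_{p₀ *} X` is determined by its `p₀`-component, which is an arbitrary morphism
`F_{p₀} ⟶ X`. Hence `i_{p₀ *}` is right adjoint to evaluation at `p₀`, and the counit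
`i_{p₀}^* i_{p₀ *} X ⟶ X` is the identity of `X` up to transport along the equality
`fibFunctor p₀ p₀ = 𝟭`.
-/

theorem CategoryTheory.Functor.map_hom_app_eq_hom_app_obj {A : Type*} [Category A] {Φ : A ⥤ A}
    (e : Φ ≅ 𝟭 A) (X : A) : Φ.map (e.hom.app X) = e.hom.app (Φ.obj X) :=
  (cancel_mono (e.hom.app X)).1 (e.hom.naturality (e.hom.app X))

namespace Glued

theorem fibFunctor_self : fibFunctor v₀ C p₀ p₀ = 𝟭 (C p₀.1) := by
  simp [fibFunctor]

noncomputable def fibFunctorSelfIso : fibFunctor v₀ C p₀ p₀ ≅ 𝟭 (C p₀.1) :=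
  eqToIso (fibFunctor_self v₀ C p₀)

noncomputable def isTerminalFibFunctorObj {p : {v : V // v ≠ v₀}} (hp : p ≠ p₀)
    (X : C p₀.1) : IsTerminal ((fibFunctor v₀ C p₀ p).obj X) := by
  rw [fibFunctor, dif_neg hp]
  exact terminalIsTerminal

open Classical in
noncomputable def toFibFunctorObj (Y : ∀ p : {v : V // v ≠ v₀}, C p.1)
    (p : {v : V // v ≠ v₀}) : Y p ⟶ (fibFunctor v₀ C p₀ p).obj (Y p₀) :=
  if hp : p = p₀ then by subst hp; exact (fibFunctorSelfIso v₀ C p).inv.app (Y p)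
  else (isTerminalFibFunctorObj v₀ C p₀ hp _).from _

theorem toFibFunctorObj_self (Y : ∀ p : {v : V // v ≠ v₀}, C p.1) :
    toFibFunctorObj v₀ C p₀ Y p₀ = (fibFunctorSelfIso v₀ C p₀).inv.app (Y p₀) := by
  simp [toFibFunctorObj]

set_option linter.unusedSectionVars false in
theorem iStar_obj_hom_ext {F : Glued v₀ C D q θ} {X : C p₀.1}
    {f g : F ⟶ (iStar v₀ C D q θ p₀).obj X} (h : f.appFib p₀ = g.appFib p₀) : f = g := by
  refine Hom.ext (terminal.hom_ext _ _) (funext fun p => ?_)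
  by_cases hp : p = p₀
  · subst hp
    exact h
  · exact (isTerminalFibFunctorObj v₀ C p₀ hp X).hom_ext _ _

noncomputable def evalFibAdjunction : evalFib p₀ ⊣ iStar v₀ C D q θ p₀ where
  unit :=
    { app := fun F =>
        { appGen := terminal.from _
          appFib := toFibFunctorObj v₀ C p₀ F.fib
          comm := fun p => (terminalIsTerminal.isTerminalObj (θ p)).hom_ext _ _ }
      naturality := fun F G f => iStar_obj_hom_ext v₀ C D q θ p₀ <| by
        change f.appFib p₀ ≫ toFibFunctorObj v₀ C p₀ G.fib p₀ =
          toFibFunctorObj v₀ C p₀ F.fib p₀ ≫ (fibFunctor v₀ C p₀ p₀).map (f.appFib p₀)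
        rw [toFibFunctorObj_self, toFibFunctorObj_self]
        exact (fibFunctorSelfIso v₀ C p₀).inv.naturality _ }
  counit := (fibFunctorSelfIso v₀ C p₀).hom
  left_triangle_components F := by
    change toFibFunctorObj v₀ C p₀ F.fib p₀ ≫ _ = _
    rw [toFibFunctorObj_self]
    exact (fibFunctorSelfIso v₀ C p₀).inv_hom_id_app _
  right_triangle_components X := iStar_obj_hom_ext v₀ C D q θ p₀ <| by
    change toFibFunctorObj v₀ C p₀ (fun p => (fibFunctor v₀ C p₀ p).obj X) p₀ ≫
      (fibFunctor v₀ C p₀ p₀).map ((fibFunctorSelfIso v₀ C p₀).hom.app X) = 𝟙 _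
    rw [toFibFunctorObj_self, Functor.map_hom_app_eq_hom_app_obj]
    exact (fibFunctorSelfIso v₀ C p₀).inv_hom_id_app _

end Glued

/-- `i_{p₀ *}` is right adjoint to the evaluation functor `i_{p₀}^* : F ⥤ C_{p₀}`,
the comparison morphism of the adjunction between `i_{p₀}^* ∘ i_{p₀ *}` and the
identity of `C_{p₀}` (the counit, i.e. the inverse direction of the unit
`id → i_{p₀}^* ∘ i_{p₀ *}` of the paper) is an isomorphism, and hence `i_{p₀ *}` is
fully faithful. -/
theorem Glued.iStar_rightAdjoint_counit_isIso :
    (∃ a : Glued.evalFib (v₀ := v₀) (C := C) (D := D) (q := q) (θ := θ) p₀ ⊣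
        Glued.iStar v₀ C D q θ p₀, IsIso a.counit) ∧
      (Glued.iStar v₀ C D q θ p₀).Full ∧ (Glued.iStar v₀ C D q θ p₀).Faithful :=
  let adj := Glued.evalFibAdjunction v₀ C D q θ p₀
  have : IsIso adj.counit := (Glued.fibFunctorSelfIso v₀ C p₀).isIso_hom
  ⟨⟨adj, this⟩, adj.fullyFaithfulROfIsIsoCounit.full, adj.fullyFaithfulROfIsIsoCounit.faithful⟩
end

section
/- Let A and B be abelian categories with enough injectives, and let j* : A → B and j_* : B → A be an adjoint pair (j* left adjoint) such that j* is exact and the counit j* ∘ j_* → id_B is an isomorphism. Then for every object X of B and every n ≥ 1, the object j*(R^n j_*(X)) is zero. -/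
open CategoryTheory Limits

/-- Let `A`, `B` be abelian categories with enough injectives and let
`jStar : A ⥤ B`, `jLower : B ⥤ A` be an adjoint pair (`jStar` left adjoint) with
`jStar` exact and such that the counit `jStar ∘ jLower → 𝟭 B` is an isomorphism.
Then for every object `X` of `B` and every `n ≥ 1`, the object
`jStar (Rⁿ jLower (X))` is zero. -/
theorem jStar_rightDerived_direct_image_isZero
    {A : Type*} [Category A] [Abelian A] [EnoughInjectives A]
    {B : Type*} [Category B] [Abelian B] [EnoughInjectives B]
    (jStar : A ⥤ B) (jLower : B ⥤ A)
    [jStar.Additive] [jLower.Additive]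
    [PreservesFiniteLimits jStar] [PreservesFiniteColimits jStar]
    (adj : jStar ⊣ jLower) (hcounit : IsIso adj.counit)
    (X : B) (n : ℕ) (hn : 1 ≤ n) :
    IsZero (jStar.obj ((jLower.rightDerived n).obj X)) := by
  obtain ⟨m, rfl⟩ : ∃ m, n = m + 1 := ⟨n - 1, (Nat.succ_pred_eq_of_pos hn).symm⟩
  let I := InjectiveResolution.of X
  refine IsZero.of_iso ?_ (jStar.mapIso (I.isoRightDerivedObj jLower (m + 1)))
  let K := (jLower.mapHomologicalComplex (ComplexShape.up ℕ)).obj I.cocomplex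
  refine IsZero.of_iso ?_ ((K.sc (m + 1)).mapHomologyIso jStar).symm
  -- goal : IsZero ((K.sc (m + 1)).map jStar).homology
  have e : ((jLower ⋙ jStar).mapHomologicalComplex (ComplexShape.up ℕ)).obj I.cocomplex ≅
      I.cocomplex :=
    (NatIso.mapHomologicalComplex (asIso adj.counit) (ComplexShape.up ℕ)).app I.cocomplex ≪≫
      (Functor.mapHomologicalComplexIdIso B (ComplexShape.up ℕ)).app I.cocomplex
  have hex : IsZero
      ((((jLower ⋙ jStar).mapHomologicalComplex (ComplexShape.up ℕ)).obj
        I.cocomplex).homology (m + 1)) := by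
    refine IsZero.of_iso ?_
      ((HomologicalComplex.homologyFunctor B (ComplexShape.up ℕ) (m + 1)).mapIso e)
    exact (HomologicalComplex.exactAt_iff_isZero_homology _ _).1
      (I.cocomplex_exactAt_succ m)
  exact hex
end
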